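/- arXiv:1901.02971 — 3 statements merged into one kernel-verified Lean document; each statement's English description precedes it below -/
import Mathlib

section
/- Theorem (stability of orthogonal sparsification): Let A = [[I, A_pn],[A_pnᵀ, A_nn]] be symmetric positive-definite. For any decomposition A_pn = Q_pf W_fn + Q_pc W_cn where [Q_pf Q_pc] is a square orthogonal matrix, the matrix B = [[I, W_cn],[W_cnᵀ, A_nn]] is symmetric positive-definite. -/
/-!
Conjugating `A` by the orthogonal block-diagonal matrix `diag([Q_pf Q_pc], I)` turns it into
`[[I, 0, W_fn], [0, I, W_cn], [W_fnᵀ, W_cnᵀ, A_nn]]`, which is again positive definite, and `B` is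
the principal submatrix of it on the last two block rows and columns.
-/

open Matrix

namespace Matrix.PosDef

variable {R : Type*} [Ring R] [PartialOrder R] [StarRing R]

theorem fromBlocks_one_of_mul_left {k m n : Type*} [Fintype k] [Fintype m] [Fintype n]
    [DecidableEq k] [DecidableEq m] [DecidableEq n] {Q : Matrix k m R} (hQ : Qᴴ * Q = 1)
    {W : Matrix m n R} {D : Matrix n n R} (h : (fromBlocks 1 (Q * W) (Q * W)ᴴ D).PosDef) :
    (fromBlocks 1 W Wᴴ D).PosDef := by
  set P : Matrix (k ⊕ n) (m ⊕ n) R := fromBlocks Q 0 0 1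
  have hP : Pᴴ * P = 1 := by simp [P, fromBlocks_conjTranspose, fromBlocks_multiply, hQ]
  have hP_inj : Function.Injective P.mulVec := fun x y hxy => by
    simpa [mulVec_mulVec, hP] using congrArg (Pᴴ *ᵥ ·) hxy
  have hcongr : Pᴴ * fromBlocks 1 (Q * W) (Q * W)ᴴ D * P = fromBlocks 1 W Wᴴ D := by
    simp [P, fromBlocks_conjTranspose, fromBlocks_multiply, Matrix.mul_assoc, ← Matrix.mul_assoc Qᴴ Q, hQ]
  exact hcongr ▸ h.conjTranspose_mul_mul_same hP_inj

theorem fromBlocks_one_fromRows_right {m₁ m₂ n : Type*} [DecidableEq m₁] [DecidableEq m₂]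
    {W₁ : Matrix m₁ n R} {W₂ : Matrix m₂ n R} {D : Matrix n n R}
    (h : (fromBlocks 1 (fromRows W₁ W₂) (fromRows W₁ W₂)ᴴ D).PosDef) :
    (fromBlocks 1 W₂ W₂ᴴ D).PosDef := by
  convert h.submatrix (Sum.map_injective.mpr ⟨Sum.inr_injective, Function.injective_id⟩) using 1
  ext (i | i) (j | j) <;> simp [one_apply]

end Matrix.PosDef

theorem sparsified_matrix_posDef_general
    {p f c n : ℕ}
    (A_pn : Matrix (Fin p) (Fin n) ℝ) (A_nn : Matrix (Fin n) (Fin n) ℝ)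
    (Q_pf : Matrix (Fin p) (Fin f) ℝ) (Q_pc : Matrix (Fin p) (Fin c) ℝ)
    (W_fn : Matrix (Fin f) (Fin n) ℝ) (W_cn : Matrix (Fin c) (Fin n) ℝ)
    (hQ : (Matrix.fromCols Q_pf Q_pc)ᵀ * Matrix.fromCols Q_pf Q_pc = 1)
    (hA : A_pn = Q_pf * W_fn + Q_pc * W_cn)
    (hPD : (Matrix.fromBlocks 1 A_pn A_pnᵀ A_nn).PosDef) :
    (Matrix.fromBlocks 1 W_cn W_cnᵀ A_nn).PosDef := by
  rw [hA, ← fromCols_mul_fromRows, ← conjTranspose_eq_transpose_of_trivial] at hPD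
  rw [← conjTranspose_eq_transpose_of_trivial] at hQ ⊢
  exact (hPD.fromBlocks_one_of_mul_left hQ).fromBlocks_one_fromRows_right

/-- Stability of orthogonal sparsification: if `A = [[I, A_pn],[A_pnᵀ, A_nn]]` is SPD
and `A_pn = Q_pf W_fn + Q_pc W_cn` with `[Q_pf Q_pc]` square orthogonal, then
`B = [[I, W_cn],[W_cnᵀ, A_nn]]` is SPD. -/
theorem sparsified_matrix_posDef
    {p f c n : ℕ} (hp : p = f + c)
    (A_pn : Matrix (Fin p) (Fin n) ℝ) (A_nn : Matrix (Fin n) (Fin n) ℝ)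
    (Q_pf : Matrix (Fin p) (Fin f) ℝ) (Q_pc : Matrix (Fin p) (Fin c) ℝ)
    (W_fn : Matrix (Fin f) (Fin n) ℝ) (W_cn : Matrix (Fin c) (Fin n) ℝ)
    (hQ : (Matrix.fromCols Q_pf Q_pc)ᵀ * Matrix.fromCols Q_pf Q_pc = 1)
    (hA : A_pn = Q_pf * W_fn + Q_pc * W_cn)
    (hPD : (Matrix.fromBlocks 1 A_pn A_pnᵀ A_nn).PosDef) :
    (Matrix.fromBlocks 1 W_cn W_cnᵀ A_nn).PosDef :=
  sparsified_matrix_posDef_general A_pn A_nn Q_pf Q_pc W_fn W_cn hQ hA hPD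
end

section
/- Under the hypotheses of the orthogonal sparsification theorem (A = [[I, A_pn],[A_pnᵀ, A_nn]] SPD and A_pn = Q_pf W_fn + Q_pc W_cn with [Q_pf Q_pc] orthogonal), the Schur complement of the sparsified matrix dominates the exact Schur complement in the Loewner order: A_nn - W_cnᵀ W_cn ⪰ A_nn - A_pnᵀ A_pn, with difference W_fnᵀ W_fn which is positive semidefinite. -/
open Matrix

/-! Since `Q = [Q_pf Q_pc]` has orthonormal columns and `A_pn = Q [W_fn; W_cn]`, the Gram matrix is
preserved: `A_pnᵀ A_pn = W_fnᵀ W_fn + W_cnᵀ W_cn`. The difference of the two Schur complements is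
therefore the Gram matrix `W_fnᵀ W_fn`. -/

namespace Matrix

variable {R m k k₁ k₂ n : Type*} [CommRing R] [Fintype m]

theorem transpose_mul_self_mul_of_transpose_mul_self_eq_one [Fintype k] [DecidableEq k]
    {Q : Matrix m k R} (hQ : Qᵀ * Q = 1) (W : Matrix k n R) :
    (Q * W)ᵀ * (Q * W) = Wᵀ * W := by
  rw [transpose_mul, Matrix.mul_assoc, ← Matrix.mul_assoc Qᵀ, hQ, Matrix.one_mul]

theorem transpose_mul_self_add_of_fromCols_orthonormal [Fintype k₁] [Fintype k₂]
    [DecidableEq k₁] [DecidableEq k₂] {Q₁ : Matrix m k₁ R} {Q₂ : Matrix m k₂ R}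
    (hQ : (fromCols Q₁ Q₂)ᵀ * fromCols Q₁ Q₂ = 1) (W₁ : Matrix k₁ n R) (W₂ : Matrix k₂ n R) :
    (Q₁ * W₁ + Q₂ * W₂)ᵀ * (Q₁ * W₁ + Q₂ * W₂) = W₁ᵀ * W₁ + W₂ᵀ * W₂ := by
  have h := transpose_mul_self_mul_of_transpose_mul_self_eq_one hQ (fromRows W₁ W₂)
  rwa [fromCols_mul_fromRows, transpose_fromRows, fromCols_mul_fromRows] at h

end Matrix

theorem sparsified_schur_dominates_exact_schur_general
    {p f c n : ℕ}
    (A_pn : Matrix (Fin p) (Fin n) ℝ) (A_nn : Matrix (Fin n) (Fin n) ℝ)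
    (Q_pf : Matrix (Fin p) (Fin f) ℝ) (Q_pc : Matrix (Fin p) (Fin c) ℝ)
    (W_fn : Matrix (Fin f) (Fin n) ℝ) (W_cn : Matrix (Fin c) (Fin n) ℝ)
    (hQ : (Matrix.fromCols Q_pf Q_pc)ᵀ * Matrix.fromCols Q_pf Q_pc = 1)
    (hA : A_pn = Q_pf * W_fn + Q_pc * W_cn) :
    (A_nn - W_cnᵀ * W_cn) - (A_nn - A_pnᵀ * A_pn) = W_fnᵀ * W_fn ∧
      ((A_nn - W_cnᵀ * W_cn) - (A_nn - A_pnᵀ * A_pn)).PosSemidef := by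
  have gram : A_pnᵀ * A_pn = W_fnᵀ * W_fn + W_cnᵀ * W_cn :=
    hA ▸ transpose_mul_self_add_of_fromCols_orthonormal hQ W_fn W_cn
  have diff : (A_nn - W_cnᵀ * W_cn) - (A_nn - A_pnᵀ * A_pn) = W_fnᵀ * W_fn := by
    rw [sub_sub_sub_cancel_left, gram, add_sub_cancel_right]
  exact ⟨diff, diff ▸ posSemidef_conjTranspose_mul_self W_fn⟩

/-- Under the hypotheses of the orthogonal sparsification theorem, the sparsified Schur
complement dominates the exact one in the Loewner order: their difference equals
`W_fnᵀ W_fn`, which is positive semidefinite. -/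
theorem sparsified_schur_dominates_exact_schur
    {p f c n : ℕ} (hp : p = f + c)
    (A_pn : Matrix (Fin p) (Fin n) ℝ) (A_nn : Matrix (Fin n) (Fin n) ℝ)
    (Q_pf : Matrix (Fin p) (Fin f) ℝ) (Q_pc : Matrix (Fin p) (Fin c) ℝ)
    (W_fn : Matrix (Fin f) (Fin n) ℝ) (W_cn : Matrix (Fin c) (Fin n) ℝ)
    (hQ : (Matrix.fromCols Q_pf Q_pc)ᵀ * Matrix.fromCols Q_pf Q_pc = 1)
    (hA : A_pn = Q_pf * W_fn + Q_pc * W_cn)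
    (hPD : (Matrix.fromBlocks 1 A_pn A_pnᵀ A_nn).PosDef) :
    (A_nn - W_cnᵀ * W_cn) - (A_nn - A_pnᵀ * A_pn) = W_fnᵀ * W_fn ∧
      ((A_nn - W_cnᵀ * W_cn) - (A_nn - A_pnᵀ * A_pn)).PosSemidef :=
  sparsified_schur_dominates_exact_schur_general A_pn A_nn Q_pf Q_pc W_fn W_cn hQ hA
end

section
/- If ‖W_fn‖₂ ≤ ε, then the Schur complement error of orthogonal sparsification satisfies ‖W_fnᵀ W_fn‖₂ ≤ ε², i.e., the sparsified Schur complement A_nn − W_cnᵀ W_cn differs from the exact Schur complement A_nn − A_pnᵀ A_pn by a positive semidefinite matrix of spectral norm at most ε². -/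
open Matrix
open scoped Matrix.Norms.L2Operator

/-!
Since `[Q_pf Q_pc]` has orthonormal columns, `A_pn = [Q_pf Q_pc] [W_fn; W_cn]` has Gram matrix
`A_pnᵀ A_pn = W_fnᵀ W_fn + W_cnᵀ W_cn`, so the two Schur complements differ by the Gram matrix
`W_fnᵀ W_fn`, which is positive semidefinite with spectral norm `‖W_fn‖²` (C⋆-identity).
-/

namespace Matrix

variable {m n : Type*} [Fintype m]

theorem transpose_mul_self_of_orthonormal_fromCols {R k₁ k₂ : Type*} [CommSemiring R]
    [Fintype k₁] [Fintype k₂] [DecidableEq k₁] [DecidableEq k₂]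
    (Q₁ : Matrix m k₁ R) (Q₂ : Matrix m k₂ R) (W₁ : Matrix k₁ n R) (W₂ : Matrix k₂ n R)
    (hQ : (fromCols Q₁ Q₂)ᵀ * fromCols Q₁ Q₂ = 1) :
    (Q₁ * W₁ + Q₂ * W₂)ᵀ * (Q₁ * W₁ + Q₂ * W₂) = W₁ᵀ * W₁ + W₂ᵀ * W₂ := by
  rw [← fromCols_mul_fromRows, transpose_mul, Matrix.mul_assoc,
    ← Matrix.mul_assoc _ (fromCols Q₁ Q₂), hQ, Matrix.one_mul, transpose_fromRows,
    fromCols_mul_fromRows]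

theorem l2_opNorm_transpose_mul_self [Fintype n] [DecidableEq n] (A : Matrix m n ℝ) :
    ‖Aᵀ * A‖ = ‖A‖ ^ 2 := by
  rw [← conjTranspose_eq_transpose_of_trivial, l2_opNorm_conjTranspose_mul_self, sq]

theorem posSemidef_transpose_mul_self [Finite n] (A : Matrix m n ℝ) : (Aᵀ * A).PosSemidef := by
  simpa only [conjTranspose_eq_transpose_of_trivial] using posSemidef_conjTranspose_mul_self A

end Matrix

theorem schur_error_norm_le_general
    {p f c n : ℕ} (ε : ℝ)
    (A_pn : Matrix (Fin p) (Fin n) ℝ) (A_nn : Matrix (Fin n) (Fin n) ℝ)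
    (Q_pf : Matrix (Fin p) (Fin f) ℝ) (Q_pc : Matrix (Fin p) (Fin c) ℝ)
    (W_fn : Matrix (Fin f) (Fin n) ℝ) (W_cn : Matrix (Fin c) (Fin n) ℝ)
    (hQ : (Matrix.fromCols Q_pf Q_pc)ᵀ * Matrix.fromCols Q_pf Q_pc = 1)
    (hA : A_pn = Q_pf * W_fn + Q_pc * W_cn)
    (hW : ‖W_fn‖ ≤ ε) :
    ‖W_fnᵀ * W_fn‖ ≤ ε ^ 2 ∧
      (A_nn - W_cnᵀ * W_cn) - (A_nn - A_pnᵀ * A_pn) = W_fnᵀ * W_fn ∧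
      (W_fnᵀ * W_fn).PosSemidef := by
  have hgram : A_pnᵀ * A_pn = W_fnᵀ * W_fn + W_cnᵀ * W_cn :=
    hA ▸ transpose_mul_self_of_orthonormal_fromCols Q_pf Q_pc W_fn W_cn hQ
  refine ⟨?_, ?_, posSemidef_transpose_mul_self W_fn⟩
  · rw [l2_opNorm_transpose_mul_self]
    gcongr
  · rw [hgram]
    abel

/-- If `‖W_fn‖₂ ≤ ε`, the sparsified Schur complement differs from the exact one by
the positive semidefinite matrix `W_fnᵀ W_fn` of spectral norm at most `ε²`. -/
theorem schur_error_norm_le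
    {p f c n : ℕ} (hp : p = f + c) (ε : ℝ)
    (A_pn : Matrix (Fin p) (Fin n) ℝ) (A_nn : Matrix (Fin n) (Fin n) ℝ)
    (Q_pf : Matrix (Fin p) (Fin f) ℝ) (Q_pc : Matrix (Fin p) (Fin c) ℝ)
    (W_fn : Matrix (Fin f) (Fin n) ℝ) (W_cn : Matrix (Fin c) (Fin n) ℝ)
    (hQ : (Matrix.fromCols Q_pf Q_pc)ᵀ * Matrix.fromCols Q_pf Q_pc = 1)
    (hA : A_pn = Q_pf * W_fn + Q_pc * W_cn)
    (hAnn : A_nn.IsSymm)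
    (hW : ‖W_fn‖ ≤ ε) :
    ‖W_fnᵀ * W_fn‖ ≤ ε ^ 2 ∧
      (A_nn - W_cnᵀ * W_cn) - (A_nn - A_pnᵀ * A_pn) = W_fnᵀ * W_fn ∧
      (W_fnᵀ * W_fn).PosSemidef :=
  schur_error_norm_le_general ε A_pn A_nn Q_pf Q_pc W_fn W_cn hQ hA hW
end
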